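/- Let V₂ be the subspace of ℝ^5 spanned by v₁ = (1,0,−1,0,0) and v₂ = (0,1,0,0,0). Identify a vector (α₀,α₁,α₂,β₁,β₂) ∈ ℝ^5 with the trigonometric polynomial t ↦ α₀ + Σ_{k=1}^{2} (α_k cos kt − β_k sin kt), and call the vector a plus-vector if this trigonometric polynomial is ≥ 0 for all t. Then a linear combination c₁v₁ + c₂v₂ is a plus-vector if and only if c₁ ≥ 0 and c₂ = 0; consequently the maximum number of linearly independent plus-vectors in V₂ equals 1. -/

import Mathlib

/-!
Writing `p(t)` for the trigonometric polynomial of `c₁ v₁ + c₂ v₂`, one has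
`p(t) = c₁ (1 - cos 2t) + c₂ cos t`. Evaluating at `t = 0`, `π` and `π/2` gives `c₂ ≥ 0`,
`c₂ ≤ 0` and `c₁ ≥ 0`; conversely `1 - cos 2t ≥ 0`. Hence the plus-vectors of `V₂` form the
ray `ℝ≥0 • v₁`, which contains no two linearly independent vectors.
-/

open Real
open scoped Real BigOperators Matrix

noncomputable section

/-- A vector `(α₀, α₁, α₂, β₁, β₂) ∈ ℝ⁵` (with `d = 2`) is a *plus-vector* if the associated
trigonometric polynomial `t ↦ α₀ + Σ_{k=1}^2 (α_k cos kt − β_k sin kt)` is nonnegative on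
`(-π, π]`. Coordinates: `v 0 = α₀`, `v 1 = α₁`, `v 2 = α₂`, `v 3 = β₁`, `v 4 = β₂`. -/
def IsPlusVec5 (v : Fin 5 → ℝ) : Prop :=
  ∀ t ∈ Set.Ioc (-π) π,
    0 ≤ v 0 + (v 1 * Real.cos t - v 3 * Real.sin t)
      + (v 2 * Real.cos (2 * t) - v 4 * Real.sin (2 * t))

open Set

theorem not_linearIndependent_pair_of_mem_span_singleton {K V : Type*} [Field K]
    [AddCommGroup V] [Module K V] {u v w : V} (hu : u ∈ K ∙ v) (hw : w ∈ K ∙ v) :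
    ¬ LinearIndependent K ![u, w] := by
  intro hli
  obtain ⟨a, rfl⟩ := Submodule.mem_span_singleton.mp hu
  obtain ⟨b, rfl⟩ := Submodule.mem_span_singleton.mp hw
  have hcomb : b • a • v + (-a) • b • v = 0 := by module
  obtain ⟨rfl, -⟩ := LinearIndependent.pair_iff.mp hli b (-a) hcomb
  exact hli.ne_zero 1 (by simp)

local notation "v₁" => (![1, 0, -1, 0, 0] : Fin 5 → ℝ)
local notation "v₂" => (![0, 1, 0, 0, 0] : Fin 5 → ℝ)

theorem isPlusVec5_smul_add_smul_iff_forall (c₁ c₂ : ℝ) :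
    IsPlusVec5 (c₁ • v₁ + c₂ • v₂) ↔
      ∀ t ∈ Ioc (-π) π, 0 ≤ c₁ * (1 - cos (2 * t)) + c₂ * cos t := by
  refine forall₂_congr fun t _ => Iff.of_eq (congrArg _ ?_)
  simp only [Matrix.smul_cons, smul_eq_mul, mul_one, mul_zero, mul_neg, Matrix.smul_empty,
    Pi.add_apply, Matrix.cons_val_zero, add_zero, Matrix.cons_val_one, zero_add, Matrix.cons_val,
    zero_mul, sub_zero, neg_mul]
  ring

theorem isPlusVec5_smul_add_smul_iff (c₁ c₂ : ℝ) :
    IsPlusVec5 (c₁ • v₁ + c₂ • v₂) ↔ 0 ≤ c₁ ∧ c₂ = 0 := by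
  rw [isPlusVec5_smul_add_smul_iff_forall]
  have hπ := pi_pos
  constructor
  · intro h
    have h₀ := h 0 ⟨by linarith, hπ.le⟩
    have h_pi := h π ⟨by linarith, le_rfl⟩
    have h_half := h (π / 2) ⟨by linarith, by linarith⟩
    rw [mul_div_cancel₀ π two_ne_zero] at h_half
    simp only [mul_zero, cos_zero, cos_two_pi, cos_pi, cos_pi_div_two]
      at h₀ h_pi h_half
    constructor <;> linarith
  · rintro ⟨hc₁, rfl⟩ t -
    simpa using mul_nonneg hc₁ (sub_nonneg.mpr (cos_le_one (2 * t)))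

theorem mem_span_singleton_of_isPlusVec5 {u : Fin 5 → ℝ}
    (hu : u ∈ Submodule.span ℝ {v₁, v₂}) (hplus : IsPlusVec5 u) : u ∈ ℝ ∙ v₁ := by
  obtain ⟨c₁, c₂, rfl⟩ := Submodule.mem_span_pair.mp hu
  obtain ⟨-, rfl⟩ := (isPlusVec5_smul_add_smul_iff c₁ c₂).mp hplus
  simpa using Submodule.smul_mem _ c₁ (Submodule.mem_span_singleton_self v₁)

/-- With `v₁ = (1,0,−1,0,0)` and `v₂ = (0,1,0,0,0)` spanning `V₂ ⊆ ℝ⁵`: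
`c₁ v₁ + c₂ v₂` is a plus-vector iff `c₁ ≥ 0` and `c₂ = 0`; consequently `V₂` contains a
nonzero plus-vector, but no two linearly independent plus-vectors, i.e. `dim₊ V₂ = 1`. -/
theorem stmt13 :
    (∀ c₁ c₂ : ℝ,
        IsPlusVec5 (c₁ • (![1, 0, -1, 0, 0] : Fin 5 → ℝ) + c₂ • ![0, 1, 0, 0, 0]) ↔
          (0 ≤ c₁ ∧ c₂ = 0))
      ∧ (∃ u ∈ Submodule.span ℝ ({![1, 0, -1, 0, 0], ![0, 1, 0, 0, 0]} : Set (Fin 5 → ℝ)),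
          IsPlusVec5 u ∧ u ≠ 0)
      ∧ (∀ u w : Fin 5 → ℝ,
          u ∈ Submodule.span ℝ ({![1, 0, -1, 0, 0], ![0, 1, 0, 0, 0]} : Set (Fin 5 → ℝ)) →
          w ∈ Submodule.span ℝ ({![1, 0, -1, 0, 0], ![0, 1, 0, 0, 0]} : Set (Fin 5 → ℝ)) →
          IsPlusVec5 u → IsPlusVec5 w → ¬ LinearIndependent ℝ ![u, w]) := by
  have hv₁_plus : IsPlusVec5 v₁ := by
    simpa using (isPlusVec5_smul_add_smul_iff 1 0).mpr ⟨zero_le_one, rfl⟩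
  have hv₁_ne : v₁ ≠ 0 := fun h => by simpa using congrFun h 0
  refine ⟨isPlusVec5_smul_add_smul_iff,
    ⟨v₁, Submodule.subset_span (by simp), hv₁_plus, hv₁_ne⟩, ?_⟩
  intro u w hu hw hu_plus hw_plus
  exact not_linearIndependent_pair_of_mem_span_singleton
    (mem_span_singleton_of_isPlusVec5 hu hu_plus) (mem_span_singleton_of_isPlusVec5 hw hw_plus)
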